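/- Under Assumptions 1 and 2 (and Assumption 3), for all sufficiently small λ ∈ (0,1] the iterates θ_t^λ are tight: sup_{t∈ℕ} P(|θ_t^λ| > n) → 0 as n → ∞. -/

import Mathlib

/-!
Dissipativity and linear growth make one SGLD step contract the squared norm,
`‖θₜ₊₁‖² ≤ (1 - λΔ) ‖θₜ‖² + κ (b(Yₜ) + ‖Yₜ‖^{2β} + 1 + ‖ξₜ₊₁‖²)`, once `λ` is small; the
cross term with the noise is absorbed by Young's inequality with weight `λΔ/2`. Stationarity of
`Y` and the common law of the `ξₜ` bound the expectation of the forcing term uniformly in `t`,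
so `E‖θₜ‖² ≤ ‖θ₀‖² + C / (λΔ)` for all `t`, and Markov's inequality gives tightness.
-/

open MeasureTheory ProbabilityTheory Filter
open scoped RealInnerProductSpace ENNReal

/-- The stochastic gradient Langevin iteration
θ_{t+1} = θ_t − λ H(θ_t, Y_t) + √λ ξ_{t+1}, θ_0 = θ₀; here `ξ t` plays the role of
the noise variable ξ_{t+1} used in the step from time t to t+1. -/
noncomputable def sgld {d m : ℕ} {Ω : Type*}
    (H : EuclideanSpace ℝ (Fin d) → EuclideanSpace ℝ (Fin m) → EuclideanSpace ℝ (Fin d))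
    (Y : ℤ → Ω → EuclideanSpace ℝ (Fin m))
    (ξ : ℕ → Ω → EuclideanSpace ℝ (Fin d))
    (lam : ℝ) (θ₀ : EuclideanSpace ℝ (Fin d)) : ℕ → Ω → EuclideanSpace ℝ (Fin d)
  | 0 => fun _ => θ₀
  | (t + 1) => fun ω =>
      sgld H Y ξ lam θ₀ t ω - lam • H (sgld H Y ξ lam θ₀ t ω) (Y (t : ℤ) ω)
        + Real.sqrt lam • ξ t ω

open Topology

lemma norm_add_sq_le_of_pos {E : Type*} [SeminormedAddCommGroup E] (u v : E) {ε : ℝ}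
    (hε : 0 < ε) : ‖u + v‖ ^ 2 ≤ (1 + ε) * ‖u‖ ^ 2 + (1 + ε⁻¹) * ‖v‖ ^ 2 := by
  have young : 2 * ‖u‖ * ‖v‖ ≤ ε * ‖u‖ ^ 2 + ε⁻¹ * ‖v‖ ^ 2 := by
    have h := mul_nonneg (inv_nonneg.2 hε.le) (sq_nonneg (ε * ‖u‖ - ‖v‖))
    have hεε : ε⁻¹ * ε = 1 := inv_mul_cancel₀ hε.ne'
    nlinarith
  calc ‖u + v‖ ^ 2 ≤ (‖u‖ + ‖v‖) ^ 2 := by gcongr; exact norm_add_le u v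
    _ ≤ _ := by linarith

/-- The condition `4λK² ≤ Δ` keeps the `λ²‖h‖²` part of the drift below `λΔ/2 · ‖a‖²`. -/
lemma norm_sq_langevin_step_le {E : Type*} [NormedAddCommGroup E] [InnerProductSpace ℝ E]
    {lam Δ K B G : ℝ} (hΔ : 0 < Δ) (hlam : 0 < lam) (hK : 4 * lam * K ^ 2 ≤ Δ) {a h : E}
    (hdis : Δ * ‖a‖ ^ 2 - B ≤ ⟪h, a⟫) (hgr : ‖h‖ ≤ K * ‖a‖ + G) (x : E) :
    ‖a - lam • h + √lam • x‖ ^ 2 ≤ (1 - lam * Δ) * ‖a‖ ^ 2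
      + ((1 + lam * Δ / 2) * (2 * lam * B + 2 * lam ^ 2 * G ^ 2) + (lam + 2 / Δ) * ‖x‖ ^ 2) := by
  have hh : ‖h‖ ^ 2 ≤ 2 * (K ^ 2 * ‖a‖ ^ 2 + G ^ 2) := by
    calc ‖h‖ ^ 2 ≤ (K * ‖a‖ + G) ^ 2 := pow_le_pow_left₀ (norm_nonneg h) hgr 2
      _ ≤ 2 * ((K * ‖a‖) ^ 2 + G ^ 2) := add_sq_le
      _ = _ := by ring
  have drift : ‖a - lam • h‖ ^ 2 ≤ (1 - 3 / 2 * (lam * Δ)) * ‖a‖ ^ 2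
      + (2 * lam * B + 2 * lam ^ 2 * G ^ 2) := by
    have hexp : ‖a - lam • h‖ ^ 2 = ‖a‖ ^ 2 - 2 * lam * ⟪h, a⟫ + lam ^ 2 * ‖h‖ ^ 2 := by
      rw [norm_sub_sq_real, real_inner_smul_right, norm_smul, real_inner_comm,
        Real.norm_eq_abs, mul_pow, sq_abs]
      ring
    have hKa : 2 * lam ^ 2 * K ^ 2 * ‖a‖ ^ 2 ≤ lam * Δ / 2 * ‖a‖ ^ 2 := by
      have : 2 * lam ^ 2 * K ^ 2 ≤ lam * Δ / 2 := by nlinarith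
      exact mul_le_mul_of_nonneg_right this (sq_nonneg _)
    nlinarith [mul_le_mul_of_nonneg_left hdis (by positivity : (0 : ℝ) ≤ 2 * lam),
      mul_le_mul_of_nonneg_left hh (sq_nonneg lam)]
  have noise : ‖√lam • x‖ ^ 2 = lam * ‖x‖ ^ 2 := by
    rw [norm_smul, Real.norm_of_nonneg (Real.sqrt_nonneg _), mul_pow, Real.sq_sqrt hlam.le]
  have hε : 0 < lam * Δ / 2 := by positivity
  have hnoise : (1 + (lam * Δ / 2)⁻¹) * (lam * ‖x‖ ^ 2) = (lam + 2 / Δ) * ‖x‖ ^ 2 := by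
    field_simp
  calc ‖a - lam • h + √lam • x‖ ^ 2
      ≤ (1 + lam * Δ / 2) * ‖a - lam • h‖ ^ 2 + (1 + (lam * Δ / 2)⁻¹) * ‖√lam • x‖ ^ 2 :=
        norm_add_sq_le_of_pos _ _ hε
    _ ≤ (1 + lam * Δ / 2) * ((1 - 3 / 2 * (lam * Δ)) * ‖a‖ ^ 2
          + (2 * lam * B + 2 * lam ^ 2 * G ^ 2)) + (lam + 2 / Δ) * ‖x‖ ^ 2 := by
        rw [noise, hnoise]; gcongr
    _ ≤ _ := by nlinarith [sq_nonneg (lam * Δ * ‖a‖)]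

lemma le_add_div_of_le_one_sub_mul_add {u : ℕ → ℝ≥0∞} {p c : ℝ≥0∞} (hp₀ : p ≠ 0)
    (hp₁ : p ≤ 1) (h : ∀ t, u (t + 1) ≤ (1 - p) * u t + c) (t : ℕ) : u t ≤ u 0 + c / p := by
  induction t with
  | zero => exact le_self_add
  | succ t ih =>
    have hfix : (1 - p) * (c / p) + c = c / p := by
      calc (1 - p) * (c / p) + c = (1 - p) * (c / p) + p * (c / p) := by
            rw [ENNReal.mul_div_cancel hp₀ (ne_top_of_le_ne_top ENNReal.one_ne_top hp₁)]
        _ = c / p := by rw [← add_mul, tsub_add_cancel_of_le hp₁, one_mul]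
    calc u (t + 1) ≤ (1 - p) * (u 0 + c / p) + c := (h t).trans (by gcongr)
      _ ≤ u 0 + c / p := by
        rw [mul_add, add_assoc, hfix]
        gcongr
        exact mul_le_of_le_one_left' tsub_le_self

lemma tendsto_iSup_measure_lt_norm_of_lintegral_sq_le {ι Ω E : Type*} [MeasurableSpace Ω]
    {μ : Measure Ω} [SeminormedAddCommGroup E] {X : ι → Ω → E}
    (hX : ∀ i, AEStronglyMeasurable (X i) μ)
    {r : ℝ≥0∞} (hr : r ≠ ∞) (hmom : ∀ i, ∫⁻ ω, ENNReal.ofReal (‖X i ω‖ ^ 2) ∂μ ≤ r) :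
    Tendsto (fun n : ℕ => ⨆ i, μ {ω | (n : ℝ) < ‖X i ω‖}) atTop (𝓝 0) := by
  have markov : ∀ n : ℕ, n ≠ 0 → ∀ i, μ {ω | (n : ℝ) < ‖X i ω‖} ≤ r / (n : ℝ≥0∞) ^ 2 := by
    intro n hn i
    have hsub : {ω | (n : ℝ) < ‖X i ω‖} ⊆ {ω | (n : ℝ≥0∞) ^ 2 ≤ ENNReal.ofReal (‖X i ω‖ ^ 2)} := by
      intro ω hω
      rw [← ENNReal.ofReal_natCast, ← ENNReal.ofReal_pow (Nat.cast_nonneg n)]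
      exact ENNReal.ofReal_le_ofReal (pow_le_pow_left₀ (Nat.cast_nonneg n) hω.le 2)
    calc μ {ω | (n : ℝ) < ‖X i ω‖} ≤ _ := measure_mono hsub
      _ ≤ (∫⁻ ω, ENNReal.ofReal (‖X i ω‖ ^ 2) ∂μ) / (n : ℝ≥0∞) ^ 2 :=
        meas_ge_le_lintegral_div ((hX i).norm.pow 2).aemeasurable.ennreal_ofReal (by simpa using hn)
          (by simp)
      _ ≤ r / (n : ℝ≥0∞) ^ 2 := by gcongr; exact hmom i
  have hbound : Tendsto (fun n : ℕ => r / (n : ℝ≥0∞) ^ 2) atTop (𝓝 0) := by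
    simpa using ENNReal.Tendsto.const_div
      (ENNReal.Tendsto.pow (n := 2) ENNReal.tendsto_nat_nhds_top) (Or.inr hr)
  refine tendsto_of_tendsto_of_tendsto_of_le_of_le' tendsto_const_nhds hbound
    (Eventually.of_forall fun _ => zero_le) ?_
  filter_upwards [eventually_ne_atTop 0] with n hn
  exact iSup_le (markov n hn)

section Stationary

variable {Ω E : Type*} [MeasurableSpace Ω] [MeasurableSpace E] {P : Measure Ω}
  {Y : ℤ → Ω → E}

lemma map_succ_eq_map_of_map_shift_eq (hY : ∀ k, Measurable (Y k))
    (hstat : Measure.map (fun ω => fun k : ℤ => Y (k + 1) ω) P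
      = Measure.map (fun ω => fun k : ℤ => Y k ω) P) (k : ℤ) :
    P.map (Y (k + 1)) = P.map (Y k) := by
  have h := congrArg (Measure.map fun f : ℤ → E => f k) hstat
  rwa [Measure.map_map (measurable_pi_apply k) (measurable_pi_lambda _ fun k => hY (k + 1)),
    Measure.map_map (measurable_pi_apply k) (measurable_pi_lambda _ hY)] at h

lemma identDistrib_of_map_shift_eq (hY : ∀ k, Measurable (Y k))
    (hstat : Measure.map (fun ω => fun k : ℤ => Y (k + 1) ω) P
      = Measure.map (fun ω => fun k : ℤ => Y k ω) P) (k : ℤ) :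
    IdentDistrib (Y k) (Y 0) P P where
  aemeasurable_fst := (hY k).aemeasurable
  aemeasurable_snd := (hY 0).aemeasurable
  map_eq := by
    induction k using Int.induction_on with
    | zero => rfl
    | succ i ih => rw [map_succ_eq_map_of_map_shift_eq hY hstat, ih]
    | pred i ih => rw [← ih, ← map_succ_eq_map_of_map_shift_eq hY hstat, sub_add_cancel]

end Stationary

section SGLD

variable {d m : ℕ} {Ω : Type*}
  {H : EuclideanSpace ℝ (Fin d) → EuclideanSpace ℝ (Fin m) → EuclideanSpace ℝ (Fin d)}
  {Y : ℤ → Ω → EuclideanSpace ℝ (Fin m)} {ξ : ℕ → Ω → EuclideanSpace ℝ (Fin d)}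
  {lam : ℝ} {θ₀ : EuclideanSpace ℝ (Fin d)}

lemma sgld_succ (t : ℕ) (ω : Ω) :
    sgld H Y ξ lam θ₀ (t + 1) ω = sgld H Y ξ lam θ₀ t ω
      - lam • H (sgld H Y ξ lam θ₀ t ω) (Y t ω) + Real.sqrt lam • ξ t ω :=
  rfl

lemma measurable_sgld [MeasurableSpace Ω] (hH : Measurable (Function.uncurry H))
    (hY : ∀ k, Measurable (Y k)) (hξ : ∀ i, Measurable (ξ i)) (t : ℕ) :
    Measurable (sgld H Y ξ lam θ₀ t) := by
  induction t with
  | zero => exact measurable_const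
  | succ t ih =>
    exact (ih.sub ((hH.comp (ih.prodMk (hY t))).const_smul lam)).add
      ((hξ t).const_smul (Real.sqrt lam))

/-- The constant `κ` of the one-step bound
`‖θₜ₊₁‖² ≤ (1 - λΔ) ‖θₜ‖² + κ (b(Yₜ) + ‖Yₜ‖^{2β} + 1 + ‖ξₜ₊₁‖²)`. -/
noncomputable def sgldForcingConst (lam Δ K₂ K₃ : ℝ) : ℝ :=
  (1 + lam * Δ / 2) * (2 * lam + 4 * lam ^ 2 * (K₂ ^ 2 + K₃ ^ 2)) + lam + 2 / Δ

lemma forcing_le_sgldForcingConst_mul {lam Δ K₂ K₃ B V X : ℝ} (hlam : 0 < lam) (hΔ : 0 < Δ)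
    (hB : 0 ≤ B) (hV : 0 ≤ V) (hX : 0 ≤ X) :
    (1 + lam * Δ / 2) * (2 * lam * B + (4 * lam ^ 2 * K₂ ^ 2 * V + 4 * lam ^ 2 * K₃ ^ 2))
      + (lam + 2 / Δ) * X ≤ sgldForcingConst lam Δ K₂ K₃ * (B + V + 1 + X) := by
  have hslack : 0 ≤ (1 + lam * Δ / 2) * (2 * lam * (V + 1 + X)
      + 4 * lam ^ 2 * K₂ ^ 2 * (B + 1 + X) + 4 * lam ^ 2 * K₃ ^ 2 * (B + V + X))
      + (lam + 2 / Δ) * (B + V + 1) := by positivity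
  have hexpand : sgldForcingConst lam Δ K₂ K₃ * (B + V + 1 + X)
      = (1 + lam * Δ / 2) * (2 * lam * B + (4 * lam ^ 2 * K₂ ^ 2 * V + 4 * lam ^ 2 * K₃ ^ 2))
        + (lam + 2 / Δ) * X + ((1 + lam * Δ / 2) * (2 * lam * (V + 1 + X)
        + 4 * lam ^ 2 * K₂ ^ 2 * (B + 1 + X) + 4 * lam ^ 2 * K₃ ^ 2 * (B + V + X))
        + (lam + 2 / Δ) * (B + V + 1)) := by
    unfold sgldForcingConst
    ring
  linarith

lemma norm_sq_sgld_succ_le {Δ K₁ K₂ K₃ β : ℝ} {b : EuclideanSpace ℝ (Fin m) → ℝ}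
    (hΔ : 0 < Δ) (hlam : 0 < lam) (hK₁ : 4 * lam * K₁ ^ 2 ≤ Δ) (hbnn : ∀ y, 0 ≤ b y)
    (hdissip : ∀ θ y, ⟪H θ y, θ⟫ ≥ Δ * ‖θ‖ ^ 2 - b y)
    (hgrowth : ∀ θ y, ‖H θ y‖ ≤ K₁ * ‖θ‖ + K₂ * ‖y‖ ^ β + K₃) (t : ℕ) (ω : Ω) :
    ‖sgld H Y ξ lam θ₀ (t + 1) ω‖ ^ 2 ≤ (1 - lam * Δ) * ‖sgld H Y ξ lam θ₀ t ω‖ ^ 2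
      + sgldForcingConst lam Δ K₂ K₃
        * (b (Y t ω) + ‖Y t ω‖ ^ (2 * β) + 1 + ‖ξ t ω‖ ^ 2) := by
  set a := sgld H Y ξ lam θ₀ t ω
  set y := Y t ω
  have hstep := norm_sq_langevin_step_le (G := K₂ * ‖y‖ ^ β + K₃) hΔ hlam hK₁ (hdissip a y)
    (by rw [← add_assoc]; exact hgrowth a y) (ξ t ω)
  have hpow : (‖y‖ ^ β) ^ 2 = ‖y‖ ^ (2 * β) := by
    rw [← Real.rpow_natCast, ← Real.rpow_mul (norm_nonneg y), mul_comm]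
    norm_num
  set c := 1 + lam * Δ / 2
  set V := ‖y‖ ^ (2 * β)
  set X := ‖ξ t ω‖ ^ 2
  have hG : 2 * lam ^ 2 * (K₂ * ‖y‖ ^ β + K₃) ^ 2
      ≤ 4 * lam ^ 2 * K₂ ^ 2 * V + 4 * lam ^ 2 * K₃ ^ 2 := by
    have hsq : (K₂ * ‖y‖ ^ β + K₃) ^ 2 ≤ 2 * (K₂ ^ 2 * V + K₃ ^ 2) := by
      rw [← hpow, ← mul_pow]
      exact add_sq_le
    nlinarith [mul_le_mul_of_nonneg_left hsq (sq_nonneg lam)]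
  calc ‖sgld H Y ξ lam θ₀ (t + 1) ω‖ ^ 2
      ≤ (1 - lam * Δ) * ‖a‖ ^ 2
        + (c * (2 * lam * b y + 2 * lam ^ 2 * (K₂ * ‖y‖ ^ β + K₃) ^ 2) + (lam + 2 / Δ) * X) := by
        rw [sgld_succ]; exact hstep
    _ ≤ (1 - lam * Δ) * ‖a‖ ^ 2
        + (c * (2 * lam * b y + (4 * lam ^ 2 * K₂ ^ 2 * V + 4 * lam ^ 2 * K₃ ^ 2))
          + (lam + 2 / Δ) * X) := by gcongr
    _ ≤ _ := by
      gcongr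
      exact forcing_le_sgldForcingConst_mul hlam hΔ (hbnn y) (Real.rpow_nonneg (norm_nonneg y) _)
        (sq_nonneg _)

lemma ofReal_norm_sq_sgld_succ_le {Δ K₁ K₂ K₃ β : ℝ} {b : EuclideanSpace ℝ (Fin m) → ℝ}
    (hΔ : 0 < Δ) (hlam : 0 < lam) (hK₁ : 4 * lam * K₁ ^ 2 ≤ Δ) (hlamΔ : lam * Δ ≤ 1)
    (hbnn : ∀ y, 0 ≤ b y) (hdissip : ∀ θ y, ⟪H θ y, θ⟫ ≥ Δ * ‖θ‖ ^ 2 - b y)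
    (hgrowth : ∀ θ y, ‖H θ y‖ ≤ K₁ * ‖θ‖ + K₂ * ‖y‖ ^ β + K₃) (t : ℕ) (ω : Ω) :
    ENNReal.ofReal (‖sgld H Y ξ lam θ₀ (t + 1) ω‖ ^ 2)
      ≤ (1 - ENNReal.ofReal (lam * Δ)) * ENNReal.ofReal (‖sgld H Y ξ lam θ₀ t ω‖ ^ 2)
        + ENNReal.ofReal (sgldForcingConst lam Δ K₂ K₃) * (ENNReal.ofReal (b (Y t ω))
          + ENNReal.ofReal (‖Y t ω‖ ^ (2 * β)) + 1 + ENNReal.ofReal (‖ξ t ω‖ ^ 2)) := by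
  have hκ : 0 ≤ sgldForcingConst lam Δ K₂ K₃ := by unfold sgldForcingConst; positivity
  have hB := hbnn (Y t ω)
  have hV : 0 ≤ ‖Y t ω‖ ^ (2 * β) := Real.rpow_nonneg (norm_nonneg _) _
  have hX : 0 ≤ ‖ξ t ω‖ ^ 2 := sq_nonneg _
  have hc : 0 ≤ 1 - lam * Δ := by linarith
  have hF := add_nonneg (add_nonneg (add_nonneg hB hV) zero_le_one) hX
  calc ENNReal.ofReal (‖sgld H Y ξ lam θ₀ (t + 1) ω‖ ^ 2)
      ≤ ENNReal.ofReal ((1 - lam * Δ) * ‖sgld H Y ξ lam θ₀ t ω‖ ^ 2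
        + sgldForcingConst lam Δ K₂ K₃ * (b (Y t ω) + ‖Y t ω‖ ^ (2 * β) + 1 + ‖ξ t ω‖ ^ 2)) :=
      ENNReal.ofReal_le_ofReal (norm_sq_sgld_succ_le hΔ hlam hK₁ hbnn hdissip hgrowth t ω)
    _ = _ := by
      rw [ENNReal.ofReal_add (mul_nonneg hc (sq_nonneg _)) (mul_nonneg hκ hF),
        ENNReal.ofReal_mul hc, ENNReal.ofReal_mul hκ, ENNReal.ofReal_add (by positivity) hX,
        ENNReal.ofReal_add (add_nonneg hB hV) zero_le_one, ENNReal.ofReal_add hB hV,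
        ENNReal.ofReal_sub _ (mul_nonneg hlam.le hΔ.le), ENNReal.ofReal_one]

lemma lintegral_sgld_forcing_le [MeasurableSpace Ω] {P : Measure Ω} [IsProbabilityMeasure P]
    {β σsq My Mb : ℝ} {b : EuclideanSpace ℝ (Fin m) → ℝ} (hY : ∀ k, Measurable (Y k))
    (hstat : Measure.map (fun ω => fun k : ℤ => Y (k + 1) ω) P
      = Measure.map (fun ω => fun k : ℤ => Y k ω) P)
    (hξ : ∀ i, Measurable (ξ i)) (hident : ∀ i, Measure.map (ξ i) P = Measure.map (ξ 0) P)
    (hξsqint : Integrable (fun ω => ‖ξ 0 ω‖ ^ 2) P) (hsec : ∫ ω, ‖ξ 0 ω‖ ^ 2 ∂P = σsq)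
    (hb : Measurable b)
    (hMy : ∫⁻ ω, ENNReal.ofReal (‖Y 0 ω‖ ^ (2 * β)) ∂P ≤ ENNReal.ofReal My)
    (hMb : ∫⁻ ω, ENNReal.ofReal (b (Y 0 ω)) ∂P ≤ ENNReal.ofReal Mb) (t : ℕ) :
    ∫⁻ ω, (ENNReal.ofReal (b (Y t ω)) + ENNReal.ofReal (‖Y t ω‖ ^ (2 * β)) + 1
        + ENNReal.ofReal (‖ξ t ω‖ ^ 2)) ∂P
      ≤ ENNReal.ofReal Mb + ENNReal.ofReal My + 1 + ENNReal.ofReal σsq := by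
  have hYt := identDistrib_of_map_shift_eq hY hstat t
  have hξt : IdentDistrib (ξ t) (ξ 0) P P := ⟨(hξ t).aemeasurable, (hξ 0).aemeasurable, hident t⟩
  have hb' : Measurable fun y => ENNReal.ofReal (b y) := hb.ennreal_ofReal
  have hV : Measurable fun y : EuclideanSpace ℝ (Fin m) => ENNReal.ofReal (‖y‖ ^ (2 * β)) :=
    (measurable_norm.pow_const _).ennreal_ofReal
  have hX : Measurable fun x : EuclideanSpace ℝ (Fin d) => ENNReal.ofReal (‖x‖ ^ 2) :=
    (measurable_norm.pow_const _).ennreal_ofReal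
  have hbY : ∫⁻ ω, ENNReal.ofReal (b (Y t ω)) ∂P = ∫⁻ ω, ENNReal.ofReal (b (Y 0 ω)) ∂P :=
    (hYt.comp hb').lintegral_eq
  have hVY : ∫⁻ ω, ENNReal.ofReal (‖Y t ω‖ ^ (2 * β)) ∂P
      = ∫⁻ ω, ENNReal.ofReal (‖Y 0 ω‖ ^ (2 * β)) ∂P :=
    (hYt.comp hV).lintegral_eq
  have hnoise : ∫⁻ ω, ENNReal.ofReal (‖ξ t ω‖ ^ 2) ∂P = ENNReal.ofReal σsq :=
    calc ∫⁻ ω, ENNReal.ofReal (‖ξ t ω‖ ^ 2) ∂P = ∫⁻ ω, ENNReal.ofReal (‖ξ 0 ω‖ ^ 2) ∂P :=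
          (hξt.comp hX).lintegral_eq
      _ = ENNReal.ofReal σsq := by
        rw [← hsec, ofReal_integral_eq_lintegral_ofReal hξsqint
          (Eventually.of_forall fun ω => sq_nonneg _)]
  have hXt : Measurable fun ω => ENNReal.ofReal (‖ξ t ω‖ ^ 2) := hX.comp (hξ t)
  have hVt : Measurable fun ω => ENNReal.ofReal (‖Y t ω‖ ^ (2 * β)) := hV.comp (hY t)
  rw [lintegral_add_right _ hXt, lintegral_add_right _ measurable_const,
    lintegral_add_right _ hVt, lintegral_const, measure_univ, mul_one, hbY, hVY,
    hnoise]
  gcongr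

lemma lintegral_norm_sq_sgld_succ_le [MeasurableSpace Ω] {P : Measure Ω}
    [IsProbabilityMeasure P] {Δ K₁ K₂ K₃ β σsq My Mb : ℝ} {b : EuclideanSpace ℝ (Fin m) → ℝ}
    (hH : Measurable (Function.uncurry H)) (hY : ∀ k, Measurable (Y k))
    (hstat : Measure.map (fun ω => fun k : ℤ => Y (k + 1) ω) P
      = Measure.map (fun ω => fun k : ℤ => Y k ω) P)
    (hξ : ∀ i, Measurable (ξ i)) (hident : ∀ i, Measure.map (ξ i) P = Measure.map (ξ 0) P)
    (hξsqint : Integrable (fun ω => ‖ξ 0 ω‖ ^ 2) P) (hsec : ∫ ω, ‖ξ 0 ω‖ ^ 2 ∂P = σsq)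
    (hΔ : 0 < Δ) (hlam : 0 < lam) (hK₁ : 4 * lam * K₁ ^ 2 ≤ Δ) (hlamΔ : lam * Δ ≤ 1)
    (hb : Measurable b) (hbnn : ∀ y, 0 ≤ b y)
    (hdissip : ∀ θ y, ⟪H θ y, θ⟫ ≥ Δ * ‖θ‖ ^ 2 - b y)
    (hgrowth : ∀ θ y, ‖H θ y‖ ≤ K₁ * ‖θ‖ + K₂ * ‖y‖ ^ β + K₃)
    (hMy : ∫⁻ ω, ENNReal.ofReal (‖Y 0 ω‖ ^ (2 * β)) ∂P ≤ ENNReal.ofReal My)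
    (hMb : ∫⁻ ω, ENNReal.ofReal (b (Y 0 ω)) ∂P ≤ ENNReal.ofReal Mb) (t : ℕ) :
    ∫⁻ ω, ENNReal.ofReal (‖sgld H Y ξ lam θ₀ (t + 1) ω‖ ^ 2) ∂P
      ≤ (1 - ENNReal.ofReal (lam * Δ)) * ∫⁻ ω, ENNReal.ofReal (‖sgld H Y ξ lam θ₀ t ω‖ ^ 2) ∂P
        + ENNReal.ofReal (sgldForcingConst lam Δ K₂ K₃)
          * (ENNReal.ofReal Mb + ENNReal.ofReal My + 1 + ENNReal.ofReal σsq) := by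
  have hθt : Measurable fun ω => ENNReal.ofReal (‖sgld H Y ξ lam θ₀ t ω‖ ^ 2) :=
    ((measurable_sgld hH hY hξ t).norm.pow_const 2).ennreal_ofReal
  calc ∫⁻ ω, ENNReal.ofReal (‖sgld H Y ξ lam θ₀ (t + 1) ω‖ ^ 2) ∂P
      ≤ ∫⁻ ω, ((1 - ENNReal.ofReal (lam * Δ)) * ENNReal.ofReal (‖sgld H Y ξ lam θ₀ t ω‖ ^ 2)
        + ENNReal.ofReal (sgldForcingConst lam Δ K₂ K₃) * (ENNReal.ofReal (b (Y t ω))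
          + ENNReal.ofReal (‖Y t ω‖ ^ (2 * β)) + 1 + ENNReal.ofReal (‖ξ t ω‖ ^ 2))) ∂P :=
      lintegral_mono (ofReal_norm_sq_sgld_succ_le hΔ hlam hK₁ hlamΔ hbnn hdissip hgrowth t)
    _ = (1 - ENNReal.ofReal (lam * Δ)) * ∫⁻ ω, ENNReal.ofReal (‖sgld H Y ξ lam θ₀ t ω‖ ^ 2) ∂P
        + ENNReal.ofReal (sgldForcingConst lam Δ K₂ K₃) * ∫⁻ ω, (ENNReal.ofReal (b (Y t ω))
          + ENNReal.ofReal (‖Y t ω‖ ^ (2 * β)) + 1 + ENNReal.ofReal (‖ξ t ω‖ ^ 2)) ∂P := by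
      rw [lintegral_add_left (hθt.const_mul _), lintegral_const_mul _ hθt,
        lintegral_const_mul' _ _ ENNReal.ofReal_ne_top]
    _ ≤ _ := by
      gcongr
      exact lintegral_sgld_forcing_le hY hstat hξ hident hξsqint hsec hb hMy hMb t

end SGLD

theorem sgld_tightness
    {d m : ℕ}
    {Ω : Type*} [MeasurableSpace Ω] (P : Measure Ω) [IsProbabilityMeasure P]
    (H : EuclideanSpace ℝ (Fin d) → EuclideanSpace ℝ (Fin m) → EuclideanSpace ℝ (Fin d))
    (hH : Measurable (Function.uncurry H))
    -- the data process: strictly stationary, measurable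
    (Y : ℤ → Ω → EuclideanSpace ℝ (Fin m)) (hYmeas : ∀ k, Measurable (Y k))
    (hstat : Measure.map (fun ω => fun k : ℤ => Y (k + 1) ω) P
      = Measure.map (fun ω => fun k : ℤ => Y k ω) P)
    -- the noise process: i.i.d., independent coordinates, mean 0, second moment σ²,
    -- independent of the data process
    (ξ : ℕ → Ω → EuclideanSpace ℝ (Fin d)) (hξmeas : ∀ i, Measurable (ξ i))
    (hident : ∀ i, Measure.map (ξ i) P = Measure.map (ξ 0) P)
    (σsq : ℝ) (hξsqint : Integrable (fun ω => ‖ξ 0 ω‖ ^ 2) P)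
    (hsec : ∫ ω, ‖ξ 0 ω‖ ^ 2 ∂P = σsq)
    -- Assumption 1 (dissipativity)
    (Δ : ℝ) (hΔ : 0 < Δ) (b : EuclideanSpace ℝ (Fin m) → ℝ)
    (hb : Measurable b) (hbnn : ∀ y, 0 ≤ b y)
    (hdissip : ∀ θ y, ⟪H θ y, θ⟫ ≥ Δ * ‖θ‖ ^ 2 - b y)
    -- Assumption 2 (growth)
    (K₁ K₂ K₃ : ℝ) (β : ℝ)
    (hgrowth : ∀ θ y, ‖H θ y‖ ≤ K₁ * ‖θ‖ + K₂ * ‖y‖ ^ β + K₃)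
    -- Assumption 3 (moments)
    (My Mb : ℝ)
    (hMy : ∫⁻ ω, ENNReal.ofReal (‖Y 0 ω‖ ^ (2 * β)) ∂P ≤ ENNReal.ofReal My)
    (hMb : ∫⁻ ω, ENNReal.ofReal (b (Y 0 ω)) ∂P ≤ ENNReal.ofReal Mb) :
    ∃ lam₀ > (0 : ℝ), ∀ lam : ℝ, 0 < lam → lam ≤ lam₀ → lam ≤ 1 →
      ∀ θ₀ : EuclideanSpace ℝ (Fin d),
        Tendsto (fun n : ℕ => ⨆ t : ℕ, P {ω | (n : ℝ) < ‖sgld H Y ξ lam θ₀ t ω‖})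
          atTop (nhds 0) := by
  refine ⟨Δ / (4 * K₁ ^ 2 + Δ ^ 2), by positivity, fun lam hlam hlam₀ _ θ₀ => ?_⟩
  have hsmall : lam * (4 * K₁ ^ 2 + Δ ^ 2) ≤ Δ := (le_div_iff₀ (by positivity)).1 hlam₀
  have hK₁ : 4 * lam * K₁ ^ 2 ≤ Δ := by nlinarith
  have hlamΔ : lam * Δ ≤ 1 := by nlinarith
  set p := ENNReal.ofReal (lam * Δ)
  have hp₀ : p ≠ 0 := (ENNReal.ofReal_pos.2 (mul_pos hlam hΔ)).ne'
  have hmom := le_add_div_of_le_one_sub_mul_add hp₀ (ENNReal.ofReal_le_one.2 hlamΔ)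
    (lintegral_norm_sq_sgld_succ_le (θ₀ := θ₀) hH hYmeas hstat hξmeas hident hξsqint hsec hΔ
      hlam hK₁ hlamΔ hb hbnn hdissip hgrowth hMy hMb)
  refine tendsto_iSup_measure_lt_norm_of_lintegral_sq_le
    (fun t => (measurable_sgld hH hYmeas hξmeas t).aestronglyMeasurable) ?_ hmom
  exact ENNReal.add_ne_top.2 ⟨by simp [sgld], ENNReal.div_ne_top (by finiteness) hp₀⟩
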